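/- Distributivity (measurement-free case): let {E_{i,δ} : δ∈Δ_i} be operator-valued functions on H over Δ_i for i = 1,...,n, and V a unitary operator acting only on H (no coin). Then the guarded composition of the families {V·E_{i,δ}} (pointwise left-composed with V) equals (I_{H_C} ⊗ V) composed with the guarded composition of {E_{i,δ}}: for all (δ_1,...,δ_n), F'(δ_1,...,δ_n) = (I_{H_C}⊗V)·F(δ_1,...,δ_n), where F' uses families {V E_{i,δ}} and F uses {E_{i,δ}}. -/

import Mathlib

noncomputable section
open scoped InnerProductSpace
open Finset

/-- Coordinate model of the tensor product `H_C ⊗ H` along a fixed orthonormal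
basis of the `n`-dimensional coin space `H_C`. -/
abbrev TensorSp (n : ℕ) (H : Type*) [NormedAddCommGroup H] [InnerProductSpace ℂ H] : Type _ :=
  PiLp 2 (fun _ : Fin n => H)

variable {n : ℕ} {H : Type*} [NormedAddCommGroup H] [InnerProductSpace ℂ H]

/-- the pure tensor `c ⊗ ψ`. -/
def pureTensor (c : EuclideanSpace ℂ (Fin n)) (ψ : H) : TensorSp n H :=
  WithLp.toLp 2 (fun i => c i • ψ)

/-- the block-diagonal operator `∑ᵢ |i⟩⟨i| ⊗ Uᵢ`, i.e. the guarded composition of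
the `Uᵢ` along the computational basis of the coin space. -/
def blockDiag (U : Fin n → (H →ₗ[ℂ] H)) : TensorSp n H →ₗ[ℂ] TensorSp n H where
  toFun x := WithLp.toLp 2 (fun i => U i (x i))
  map_add' x y := by ext i; simp [map_add]
  map_smul' c x := by ext i; simp [map_smul]

/-- `A ⊗ B` in the coordinate model, `A` acting on the coin space. -/
def tensorOp (A : EuclideanSpace ℂ (Fin n) →ₗ[ℂ] EuclideanSpace ℂ (Fin n))
    (B : H →ₗ[ℂ] H) : TensorSp n H →ₗ[ℂ] TensorSp n H where
  toFun x := WithLp.toLp 2 (fun i => ∑ b : Fin n, A (EuclideanSpace.single b 1) i • B (x b))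
  map_add' x y := by
    ext i; simp [map_add, smul_add, Finset.sum_add_distrib]
  map_smul' c x := by
    ext i; simp [map_smul, Finset.smul_sum, smul_comm c]

/-- `A ⊗ I_H`. -/
def tensorLeft (A : EuclideanSpace ℂ (Fin n) →ₗ[ℂ] EuclideanSpace ℂ (Fin n)) :
    TensorSp n H →ₗ[ℂ] TensorSp n H :=
  tensorOp A LinearMap.id

/-- A linear operator is unitary iff it preserves inner products and is bijective. -/
def IsUnitaryOp {E : Type*} [NormedAddCommGroup E] [InnerProductSpace ℂ E]
    (A : E →ₗ[ℂ] E) : Prop :=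
  (∀ x y : E, ⟪A x, A y⟫_ℂ = ⟪x, y⟫_ℂ) ∧ Function.Bijective A

/-- Positive (semidefinite) operator. -/
def IsPosOp {E : Type*} [NormedAddCommGroup E] [InnerProductSpace ℂ E]
    (A : E →ₗ[ℂ] E) : Prop :=
  ∀ x : E, (⟪x, A x⟫_ℂ).im = 0 ∧ 0 ≤ (⟪x, A x⟫_ℂ).re

/-- Löwner order `A ⊑ B`. -/
def Loewner {E : Type*} [NormedAddCommGroup E] [InnerProductSpace ℂ E]
    (A B : E →ₗ[ℂ] E) : Prop :=
  IsPosOp (B - A)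

section guarded
variable [FiniteDimensional ℂ H] {Δ : Fin n → Type*} [∀ k, Fintype (Δ k)]

/-- the coefficients `λ_{kδ}`. -/
def lam (F : ∀ k, Δ k → (H →ₗ[ℂ] H)) (k : Fin n) (δ : Δ k) : ℝ :=
  Real.sqrt ((LinearMap.trace ℂ H (LinearMap.adjoint (F k δ) ∘ₗ F k δ)).re /
    ∑ τ : Δ k, (LinearMap.trace ℂ H (LinearMap.adjoint (F k τ) ∘ₗ F k τ)).re)

/-- the guarded composition `□ᵢ |i⟩ → Fᵢ` of operator-valued functions, evaluated at
`⊕ᵢ δᵢ`. -/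
def guardedComp (F : ∀ k, Δ k → (H →ₗ[ℂ] H)) (δ : ∀ k, Δ k) :
    TensorSp n H →ₗ[ℂ] TensorSp n H where
  toFun x := WithLp.toLp 2 (fun i => (∏ k ∈ Finset.univ.erase i, lam F k (δ k)) • F i (δ i) (x i))
  map_add' x y := by ext i; simp [map_add, smul_add]
  map_smul' c x := by
    ext i; simp [map_smul, smul_comm c]

end guarded

/-- partial trace over the coin space of an operator on `H_C ⊗ H`. -/
def coinProj (i : Fin n) : TensorSp n H →ₗ[ℂ] H where
  toFun x := x i
  map_add' _ _ := rfl
  map_smul' _ _ := rfl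

def coinIncl (i : Fin n) : H →ₗ[ℂ] TensorSp n H where
  toFun ψ := WithLp.toLp 2 (Pi.single i ψ)
  map_add' x y := by ext j; simp [Pi.single_apply]; split_ifs <;> simp
  map_smul' c x := by ext j; by_cases h : j = i <;> simp [Pi.single_apply, h]

def trCoin (A : TensorSp n H →ₗ[ℂ] TensorSp n H) : H →ₗ[ℂ] H :=
  ∑ i : Fin n, coinProj i ∘ₗ A ∘ₗ coinIncl i

/-- the outer product `|x⟩⟨y|`. -/
def outer {E : Type*} [NormedAddCommGroup E] [InnerProductSpace ℂ E]
    (x y : E) : E →ₗ[ℂ] E :=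
  ((innerSL ℂ y).toLinearMap).smulRight x

/-! The weights `lam` depend on the families only through the Gram operators `E† E`, which do
not change when each `E k d` is composed on the left with an isometry; with equal weights, the
guarded composition then factors coordinatewise through `blockDiag`. -/

namespace LinearMap

variable {𝕜 E F G : Type*} [RCLike 𝕜]
  [NormedAddCommGroup E] [InnerProductSpace 𝕜 E]
  [NormedAddCommGroup F] [InnerProductSpace 𝕜 F] [FiniteDimensional 𝕜 F]
  [NormedAddCommGroup G] [InnerProductSpace 𝕜 G] [FiniteDimensional 𝕜 G]

theorem adjoint_comp_self_of_inner_map_map {V : F →ₗ[𝕜] G}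
    (hV : ∀ x y, ⟪V x, V y⟫_𝕜 = ⟪x, y⟫_𝕜) : adjoint V ∘ₗ V = id :=
  (V.isometryOfInner hV).adjoint_comp_self'

theorem adjoint_comp_self_isometry_comp [FiniteDimensional 𝕜 E] {V : F →ₗ[𝕜] G}
    (hV : ∀ x y, ⟪V x, V y⟫_𝕜 = ⟪x, y⟫_𝕜) (A : E →ₗ[𝕜] F) :
    adjoint (V ∘ₗ A) ∘ₗ (V ∘ₗ A) = adjoint A ∘ₗ A := by
  rw [adjoint_comp, comp_assoc, ← comp_assoc A V,
    adjoint_comp_self_of_inner_map_map hV, id_comp]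

end LinearMap

section guarded

variable [FiniteDimensional ℂ H] {Δ : Fin n → Type*} [∀ k, Fintype (Δ k)]

theorem lam_isometry_comp {U : Fin n → H →ₗ[ℂ] H}
    (hU : ∀ k x y, ⟪U k x, U k y⟫_ℂ = ⟪x, y⟫_ℂ) (E : ∀ k, Δ k → (H →ₗ[ℂ] H)) :
    lam (fun k d => U k ∘ₗ E k d) = lam E := by
  funext k d
  simp only [lam, LinearMap.adjoint_comp_self_isometry_comp (hU k)]

theorem guardedComp_isometry_comp {U : Fin n → H →ₗ[ℂ] H}
    (hU : ∀ k x y, ⟪U k x, U k y⟫_ℂ = ⟪x, y⟫_ℂ) (E : ∀ k, Δ k → (H →ₗ[ℂ] H))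
    (δ : ∀ k, Δ k) :
    guardedComp (fun k d => U k ∘ₗ E k d) δ = blockDiag U ∘ₗ guardedComp E δ := by
  ext x i
  simp only [guardedComp, blockDiag, lam_isometry_comp hU, LinearMap.coe_mk, AddHom.coe_mk,
    LinearMap.comp_apply, LinearMap.map_smul_of_tower]

end guarded

theorem guardedComp_distrib_general {n : ℕ} {H : Type*} [NormedAddCommGroup H]
    [InnerProductSpace ℂ H] [FiniteDimensional ℂ H]
    {Δ : Fin n → Type*} [∀ k, Fintype (Δ k)] (E : ∀ k, Δ k → (H →ₗ[ℂ] H))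
    (V : H →ₗ[ℂ] H) (hV : IsUnitaryOp V) :
    ∀ δ : (∀ k, Δ k),
      guardedComp (fun k d => V ∘ₗ E k d) δ
        = blockDiag (fun _ : Fin n => V) ∘ₗ guardedComp E δ :=
  guardedComp_isometry_comp (fun _ => hV.1) E

/-- distributivity (measurement-free case) — the guarded composition of
the families `{V·E_{i,δ}}` equals `(I ⊗ V)` composed with the guarded composition of
the families `{E_{i,δ}}`. -/
theorem guardedComp_distrib {n : ℕ} {H : Type*} [NormedAddCommGroup H]
    [InnerProductSpace ℂ H] [FiniteDimensional ℂ H]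
    {Δ : Fin n → Type*} [∀ k, Fintype (Δ k)] (E : ∀ k, Δ k → (H →ₗ[ℂ] H))
    (hovf : ∀ k, Loewner (∑ δ : Δ k, LinearMap.adjoint (E k δ) ∘ₗ E k δ) LinearMap.id)
    (V : H →ₗ[ℂ] H) (hV : IsUnitaryOp V) :
    ∀ δ : (∀ k, Δ k),
      guardedComp (fun k d => V ∘ₗ E k d) δ
        = blockDiag (fun _ : Fin n => V) ∘ₗ guardedComp E δ :=
  guardedComp_distrib_general E V hV
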